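/- Fix k, l ∈ ℕ, δ > 0, ν ≥ 0, and real numbers s < t < t + r < u with r > 0 and t + r > 0. Let (T_i)_{i ≥ 1} and (S_j)_{j ≥ 1} be real-valued random variables such that: (a) the σ-algebra generated by the family (T_i, S_j)_{i,j ≥ 1} is independent of the σ-algebra generated by the family (ξ_{k,i})_{k,i}; (b) ℙ(S_j ≥ t + r) ≤ l^{1+δ} · ν / (t + r)^{1+δ} for every j ≥ 1; (c) ℙ(Z_k ≥ i, Z_l ≥ j) ≥ ℙ(Z_k ≥ i)ℙ(Z_l ≥ j) for all i, j ≥ 1. Then |Cov(Σ_{i=1}^{Z_k} 1_{{T_i ∈ (s, t]}}, Σ_{j=1}^{Z_l} 1_{{S_j ∈ (t+r, u]}})| ≤ 2 · l^{1+δ} · ν / (t + r)^{1+δ} · μ^{max(k,l)} · (1 − μ^{min(k,l)+1})/(1 − μ). -/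

import Mathlib

/-!
Both counts `X` and `Y` are nonnegative, so `|E[XY] - E[X]E[Y]|` is at most the larger of
`E[XY]` and `E[X]E[Y]`. Each `S_j` is independent of the offspring variables, hence of
`(Z_k, Z_l)`, and lands in `(t+r, u]` with probability at most the tail bound `c`; since
`X ≤ Z_k`, this gives `E[XY] ≤ E[Z_k Y] ≤ c E[Z_k Z_l]`, and likewise
`E[X]E[Y] ≤ c E[Z_k] E[Z_l] ≤ c E[Z_k Z_l]` by positive quadrant dependence.
Conditioning on the first `m` generations (Wald's identities for Poisson random sums) gives
`E[Z_n Z_{n+d}] = μ^d E[Z_n²]` and `E[Z_{m+1}²] = μ² E[Z_m²] + μ E[Z_m]`, whence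
`E[Z_k Z_l] = μ^{max k l} (1 - μ^{min k l + 1}) / (1 - μ)`.
-/

open MeasureTheory ProbabilityTheory Finset
open scoped ENNReal

section RandomIndexSums

variable {Ω : Type*} {mΩ : MeasurableSpace Ω}

lemma measurable_sum_Icc {β : Type*} [AddCommMonoid β] [MeasurableSpace β] [MeasurableAdd₂ β]
    {N : Ω → ℕ} (hN : Measurable N) {f : ℕ → Ω → β} (hf : ∀ i, Measurable (f i)) :
    Measurable fun ω => ∑ i ∈ Icc 1 (N ω), f i ω :=
  (measurable_from_prod_countable_left (f := fun q : Ω × ℕ => ∑ i ∈ Icc 1 q.2, f i q.1)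
    fun n => Finset.measurable_sum (Icc 1 n) fun i _ => hf i).comp (measurable_id.prodMk hN)

lemma measurableSet_mem_Icc {N : Ω → ℕ} (hN : Measurable N) (i : ℕ) :
    MeasurableSet {ω | i ∈ Icc 1 (N ω)} :=
  hN (t := {n | i ∈ Icc 1 n}) (Set.to_countable _).measurableSet

lemma sum_Icc_eq_tsum_indicator (N : Ω → ℕ) (f : ℕ → Ω → ℝ≥0∞) (ω : Ω) :
    ∑ i ∈ Icc 1 (N ω), f i ω = ∑' i, {ω | i ∈ Icc 1 (N ω)}.indicator (f i) ω := by
  rw [sum_eq_tsum_indicator]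
  rfl

variable (ν : Measure Ω) {N M : Ω → ℕ}

lemma lintegral_sum_Icc (hN : Measurable N) {f : ℕ → Ω → ℝ≥0∞} (hf : ∀ i, Measurable (f i)) :
    ∫⁻ ω, ∑ i ∈ Icc 1 (N ω), f i ω ∂ν = ∑' i, ∫⁻ ω in {ω | i ∈ Icc 1 (N ω)}, f i ω ∂ν := by
  simp_rw [sum_Icc_eq_tsum_indicator N f]
  rw [lintegral_tsum fun i => ((hf i).indicator (measurableSet_mem_Icc hN i)).aemeasurable]
  simp_rw [lintegral_indicator (measurableSet_mem_Icc hN _)]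

lemma lintegral_sum_Icc_mul_sum_Icc (hN : Measurable N) (hM : Measurable M)
    {f g : ℕ → Ω → ℝ≥0∞} (hf : ∀ i, Measurable (f i)) (hg : ∀ j, Measurable (g j)) :
    ∫⁻ ω, (∑ i ∈ Icc 1 (N ω), f i ω) * ∑ j ∈ Icc 1 (M ω), g j ω ∂ν
      = ∑' i, ∑' j, ∫⁻ ω in {ω | i ∈ Icc 1 (N ω)} ∩ {ω | j ∈ Icc 1 (M ω)}, f i ω * g j ω ∂ν := by
  simp_rw [sum_mul]
  rw [lintegral_sum_Icc ν hN (f := fun i ω => f i ω * ∑ j ∈ Icc 1 (M ω), g j ω)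
    fun i => (hf i).mul (measurable_sum_Icc hM hg)]
  refine tsum_congr fun i => ?_
  simp_rw [mul_sum]
  rw [lintegral_sum_Icc _ hM (f := fun j ω => f i ω * g j ω) fun j => (hf i).mul (hg j)]
  simp_rw [Measure.restrict_restrict (measurableSet_mem_Icc hM _), Set.inter_comm]

lemma lintegral_mul_natCast_eq_tsum (hN : Measurable N) {h : Ω → ℝ≥0∞} (hh : Measurable h) :
    ∫⁻ ω, h ω * N ω ∂ν = ∑' i, ∫⁻ ω in {ω | i ∈ Icc 1 (N ω)}, h ω ∂ν := by
  rw [← lintegral_sum_Icc ν hN fun _ => hh]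
  simp [mul_comm]

lemma lintegral_natCast_eq_tsum (hN : Measurable N) :
    ∫⁻ ω, (N ω : ℝ≥0∞) ∂ν = ∑' i, ν {ω | i ∈ Icc 1 (N ω)} := by
  simpa using lintegral_mul_natCast_eq_tsum ν hN measurable_const (h := 1)

lemma lintegral_natCast_mul_natCast_eq_tsum (hN : Measurable N) (hM : Measurable M) :
    ∫⁻ ω, (N ω : ℝ≥0∞) * M ω ∂ν
      = ∑' i, ∑' j, ν ({ω | i ∈ Icc 1 (N ω)} ∩ {ω | j ∈ Icc 1 (M ω)}) := by
  simpa using lintegral_sum_Icc_mul_sum_Icc ν hN hM (f := 1) (g := 1) (fun _ => measurable_const)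
    (fun _ => measurable_const)

lemma lintegral_mul_le_lintegral_mul_of_pqd {P : Measure Ω} (hN : Measurable N)
    (hM : Measurable M)
    (hpqd : ∀ i j : ℕ, 1 ≤ i → 1 ≤ j →
      P {ω | i ≤ N ω} * P {ω | j ≤ M ω} ≤ P {ω | i ≤ N ω ∧ j ≤ M ω}) :
    (∫⁻ ω, (N ω : ℝ≥0∞) ∂P) * ∫⁻ ω, (M ω : ℝ≥0∞) ∂P ≤ ∫⁻ ω, (N ω : ℝ≥0∞) * M ω ∂P := by
  rw [lintegral_natCast_eq_tsum P hN, lintegral_natCast_eq_tsum P hM,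
    lintegral_natCast_mul_natCast_eq_tsum P hN hM, ← ENNReal.tsum_mul_right]
  refine ENNReal.tsum_le_tsum fun i => ?_
  rw [← ENNReal.tsum_mul_left]
  refine ENNReal.tsum_le_tsum fun j => ?_
  have hIcc (K : Ω → ℕ) (n : ℕ) : {ω | n + 1 ∈ Icc 1 (K ω)} = {ω | n + 1 ≤ K ω} := by
    ext; simp
  cases i with
  | zero => simp
  | succ i =>
    cases j with
    | zero => simp
    | succ j =>
      rw [hIcc, hIcc]
      exact hpqd (i + 1) (j + 1) (by omega) (by omega)

end RandomIndexSums

section IndependentSummands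

variable {Ω : Type*} {G : MeasurableSpace Ω} {M : ℕ → MeasurableSpace Ω} {mΩ : MeasurableSpace Ω}
  {P : Measure Ω} {N : Ω → ℕ} {ξ : ℕ → Ω → ℝ≥0∞}

lemma setLIntegral_mul_eq_of_indep {M' : MeasurableSpace Ω} (hG : G ≤ mΩ) (hM' : M' ≤ mΩ)
    (hGM : Indep G M' P) {s : Set Ω} (hs : MeasurableSet[G] s) {f g : Ω → ℝ≥0∞}
    (hf : Measurable[G] f) (hg : Measurable[M'] g) :
    ∫⁻ ω in s, f ω * g ω ∂P = (∫⁻ ω in s, f ω ∂P) * ∫⁻ ω, g ω ∂P := by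
  rw [← lintegral_indicator (hG _ hs), ← lintegral_indicator (hG _ hs)]
  simp_rw [Set.indicator_mul_left]
  exact lintegral_mul_eq_lintegral_mul_lintegral_of_independent_measurableSpace hG hM' hGM
    (hf.indicator hs) hg

variable (hG : G ≤ mΩ) (hM : ∀ i, M i ≤ mΩ) (hN : Measurable[G] N)
  (hξ : ∀ i, Measurable[M i] (ξ i))
include hG hM hN hξ

lemma lintegral_mul_sum_Icc_of_indep (hindep : ∀ i, Indep G (M i) P) {h : Ω → ℝ≥0∞}
    (hh : Measurable[G] h) :
    ∫⁻ ω, h ω * ∑ i ∈ Icc 1 (N ω), ξ i ω ∂P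
      = ∑' i, (∫⁻ ω in {ω | i ∈ Icc 1 (N ω)}, h ω ∂P) * ∫⁻ ω, ξ i ω ∂P := by
  simp_rw [mul_sum]
  rw [lintegral_sum_Icc P (hN.mono hG le_rfl) (f := fun i ω => h ω * ξ i ω)
    fun i => (hh.mono hG le_rfl).mul ((hξ i).mono (hM i) le_rfl)]
  exact tsum_congr fun i => setLIntegral_mul_eq_of_indep hG (hM i) (hindep i)
    (measurableSet_mem_Icc hN i) hh (hξ i)

lemma lintegral_mul_sum_Icc_eq_of_indep (hindep : ∀ i, Indep G (M i) P) {m : ℝ≥0∞}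
    (hm : ∀ i, ∫⁻ ω, ξ i ω ∂P = m) {h : Ω → ℝ≥0∞} (hh : Measurable[G] h) :
    ∫⁻ ω, h ω * ∑ i ∈ Icc 1 (N ω), ξ i ω ∂P = m * ∫⁻ ω, h ω * N ω ∂P := by
  rw [lintegral_mul_sum_Icc_of_indep hG hM hN hξ hindep hh,
    lintegral_mul_natCast_eq_tsum P (hN.mono hG le_rfl) (hh.mono hG le_rfl),
    ← ENNReal.tsum_mul_left]
  simp_rw [hm, mul_comm m]

lemma lintegral_mul_sum_Icc_le_of_indep (hindep : ∀ i, Indep G (M i) P) {c : ℝ≥0∞}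
    (hc : ∀ i, 1 ≤ i → ∫⁻ ω, ξ i ω ∂P ≤ c) {h : Ω → ℝ≥0∞} (hh : Measurable[G] h) :
    ∫⁻ ω, h ω * ∑ i ∈ Icc 1 (N ω), ξ i ω ∂P ≤ c * ∫⁻ ω, h ω * N ω ∂P := by
  rw [lintegral_mul_sum_Icc_of_indep hG hM hN hξ hindep hh,
    lintegral_mul_natCast_eq_tsum P (hN.mono hG le_rfl) (hh.mono hG le_rfl),
    ← ENNReal.tsum_mul_left]
  refine ENNReal.tsum_le_tsum fun i => ?_
  rcases Nat.eq_zero_or_pos i with rfl | hi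
  · simp
  · rw [mul_comm c]
    exact mul_le_mul_right (hc i hi) _

lemma lintegral_sum_Icc_sq_of_indep (hindep : ∀ i j, i ≠ j → Indep (G ⊔ M i) (M j) P)
    {m v : ℝ≥0∞} (hm : ∀ i, ∫⁻ ω, ξ i ω ∂P = m) (hv : ∀ i, ∫⁻ ω, ξ i ω ^ 2 ∂P = m ^ 2 + v) :
    ∫⁻ ω, (∑ i ∈ Icc 1 (N ω), ξ i ω) ^ 2 ∂P
      = m ^ 2 * ∫⁻ ω, (N ω : ℝ≥0∞) ^ 2 ∂P + v * ∫⁻ ω, (N ω : ℝ≥0∞) ∂P := by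
  have hN' : Measurable N := hN.mono hG le_rfl
  have hGM i : Indep G (M i) P :=
    indep_of_indep_of_le_left (hindep (i + 1) i (by omega)) le_sup_left
  simp_rw [sq]
  rw [lintegral_sum_Icc_mul_sum_Icc P hN' hN' (fun i => (hξ i).mono (hM i) le_rfl)
      (fun i => (hξ i).mono (hM i) le_rfl),
    lintegral_natCast_mul_natCast_eq_tsum P hN' hN', lintegral_natCast_eq_tsum P hN']
  set s : ℕ → Set Ω := fun i => {ω | i ∈ Icc 1 (N ω)}
  have hs i : MeasurableSet[G] (s i) := measurableSet_mem_Icc hN i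
  have term i j : ∫⁻ ω in s i ∩ s j, ξ i ω * ξ j ω ∂P
      = P (s i ∩ s j) * m ^ 2 + if j = i then P (s i) * v else 0 := by
    by_cases hij : j = i
    · subst hij
      have := setLIntegral_mul_eq_of_indep hG (hM j) (hGM j) (hs j) measurable_const
        ((hξ j).pow_const 2) (f := 1)
      simp only [Pi.one_apply, one_mul, setLIntegral_one, hv] at this
      simp [← sq, this, mul_add]
    · have hsij : MeasurableSet[G] (s i ∩ s j) := (hs i).inter (hs j)
      have hξi := setLIntegral_mul_eq_of_indep hG (hM i) (hGM i) hsij measurable_const (hξ i)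
        (f := 1)
      simp only [Pi.one_apply, one_mul, setLIntegral_one, hm] at hξi
      rw [setLIntegral_mul_eq_of_indep (sup_le hG (hM i)) (hM j) (hindep i j (Ne.symm hij))
        (le_sup_left (a := G) _ hsij) ((hξ i).mono le_sup_right le_rfl) (hξ j), hm, hξi,
        if_neg hij]
      ring
  simp only [s] at term
  simp_rw [term, ENNReal.tsum_add, tsum_ite_eq, ENNReal.tsum_mul_right]
  ring

end IndependentSummands

section Poisson

variable {Ω : Type*} {mΩ : MeasurableSpace Ω} {P : Measure Ω} {N : Ω → ℕ}

lemma lintegral_comp_eq_tsum (hN : Measurable N) (F : ℕ → ℝ≥0∞) :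
    ∫⁻ ω, F (N ω) ∂P = ∑' n, F n * P {ω | N ω = n} := by
  rw [← lintegral_map (f := F) measurable_from_top hN, lintegral_countable']
  congr 1
  ext n
  rw [Measure.map_apply hN (MeasurableSet.singleton n)]
  rfl

variable {μ : ℝ} (hμ : 0 ≤ μ)
  (hpois : ∀ n, P {ω | N ω = n} = ENNReal.ofReal (Real.exp (-μ) * μ ^ n / n.factorial))
include hμ hpois

lemma natCast_succ_mul_measure_eq_of_poisson (n : ℕ) :
    ((n : ℝ≥0∞) + 1) * P {ω | N ω = n + 1} = ENNReal.ofReal μ * P {ω | N ω = n} := by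
  rw [hpois, hpois, ← ENNReal.ofReal_natCast, ← ENNReal.ofReal_one,
    ← ENNReal.ofReal_add (by positivity) zero_le_one, ← ENNReal.ofReal_mul (by positivity),
    ← ENNReal.ofReal_mul hμ, Nat.factorial_succ]
  congr 1
  push_cast
  field_simp
  ring

variable (hN : Measurable N)
include hN

lemma lintegral_natCast_mul_of_poisson (g : ℕ → ℝ≥0∞) :
    ∫⁻ ω, N ω * g (N ω) ∂P = ENNReal.ofReal μ * ∫⁻ ω, g (N ω + 1) ∂P := by
  rw [lintegral_comp_eq_tsum hN (fun n => n * g n), lintegral_comp_eq_tsum hN (fun n => g (n + 1)),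
    tsum_eq_zero_add' ENNReal.summable, ← ENNReal.tsum_mul_left]
  simp only [Nat.cast_zero, zero_mul, zero_add]
  refine tsum_congr fun n => ?_
  push_cast
  rw [mul_right_comm, natCast_succ_mul_measure_eq_of_poisson hμ hpois]
  ring

variable [IsProbabilityMeasure P]

lemma lintegral_of_poisson : ∫⁻ ω, (N ω : ℝ≥0∞) ∂P = ENNReal.ofReal μ := by
  simpa using lintegral_natCast_mul_of_poisson hμ hpois hN 1

lemma lintegral_sq_of_poisson :
    ∫⁻ ω, (N ω : ℝ≥0∞) ^ 2 ∂P = ENNReal.ofReal μ ^ 2 + ENNReal.ofReal μ := by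
  simp_rw [sq]
  rw [lintegral_natCast_mul_of_poisson hμ hpois hN (fun n => n)]
  push_cast
  rw [lintegral_add_right _ measurable_const, lintegral_of_poisson hμ hpois hN]
  simp [mul_add]

end Poisson

section GaltonWatson

variable {Ω : Type*} {ξ : ℕ → ℕ → Ω → ℕ}

abbrev offspringSigma (ξ : ℕ → ℕ → Ω → ℕ) (m : ℕ) : MeasurableSpace Ω :=
  ⨆ p ∈ {p : ℕ × ℕ | p.1 < m}, MeasurableSpace.comap (ξ p.1 p.2) inferInstance

lemma measurable_offspringSigma {k m : ℕ} (hk : k < m) (i : ℕ) :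
    Measurable[offspringSigma ξ m] (ξ k i) :=
  Measurable.of_comap_le (le_iSup₂_of_le (k, i) hk le_rfl)

lemma offspringSigma_mono : Monotone (offspringSigma ξ) := fun _ _ h =>
  iSup₂_le fun p hp => le_iSup₂_of_le p (lt_of_lt_of_le hp h) le_rfl

lemma offspringSigma_le_comap (m : ℕ) :
    offspringSigma ξ m ≤ MeasurableSpace.comap (fun ω (q : ℕ × ℕ) => ξ q.1 q.2 ω) inferInstance :=
  iSup₂_le fun p _ => ((measurable_pi_apply p).comp
    (comap_measurable fun ω (q : ℕ × ℕ) => ξ q.1 q.2 ω)).comap_le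

variable {mΩ : MeasurableSpace Ω} {P : Measure Ω}

lemma offspringSigma_le (hmeas : ∀ k i, Measurable (ξ k i)) (m : ℕ) : offspringSigma ξ m ≤ mΩ :=
  iSup₂_le fun p _ => (hmeas p.1 p.2).comap_le

lemma indep_offspringSigma_sup (hmeas : ∀ k i, Measurable (ξ k i))
    (hindep : iIndepFun (fun p : ℕ × ℕ => ξ p.1 p.2) P) (m : ℕ) {i j : ℕ} (hij : i ≠ j) :
    Indep (offspringSigma ξ m ⊔ MeasurableSpace.comap (ξ m i) inferInstance)
      (MeasurableSpace.comap (ξ m j) inferInstance) P := by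
  have h := indep_iSup_of_disjoint
    (m := fun p : ℕ × ℕ => MeasurableSpace.comap (ξ p.1 p.2) inferInstance)
    (fun p => (hmeas p.1 p.2).comap_le) hindep
    (S := {p : ℕ × ℕ | p.1 < m} ∪ {(m, i)}) (T := {(m, j)}) (by
      rw [Set.disjoint_singleton_right]
      rintro (h | h) <;> simp_all)
  rw [_root_.iSup_union] at h
  simpa [offspringSigma] using h

variable {Z : ℕ → Ω → ℕ} (hZ0 : ∀ ω, Z 0 ω = 1)
  (hZrec : ∀ k ω, Z (k + 1) ω = ∑ i ∈ Icc 1 (Z k ω), ξ k i ω)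
include hZ0 hZrec

lemma measurable_galtonWatson (m : ℕ) : Measurable[offspringSigma ξ m] (Z m) := by
  induction m with
  | zero => simp [funext hZ0]
  | succ m ih =>
    rw [funext (hZrec m)]
    exact measurable_sum_Icc (ih.mono (offspringSigma_mono (Nat.le_succ m)) le_rfl)
      fun i => measurable_offspringSigma (Nat.lt_succ_self m) i

variable [IsProbabilityMeasure P] {μ : ℝ} (hμ : 0 ≤ μ) (hmeas : ∀ k i, Measurable (ξ k i))
  (hindep : iIndepFun (fun p : ℕ × ℕ => ξ p.1 p.2) P)
  (hpois : ∀ k i n, P {ω | ξ k i ω = n}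
    = ENNReal.ofReal (Real.exp (-μ) * μ ^ n / n.factorial))
include hμ hmeas hindep hpois

lemma lintegral_mul_galtonWatson_succ (m : ℕ) {h : Ω → ℝ≥0∞}
    (hh : Measurable[offspringSigma ξ m] h) :
    ∫⁻ ω, h ω * Z (m + 1) ω ∂P = ENNReal.ofReal μ * ∫⁻ ω, h ω * Z m ω ∂P := by
  simpa [hZrec] using lintegral_mul_sum_Icc_eq_of_indep (offspringSigma_le hmeas m)
    (fun i => (hmeas m i).comap_le) (measurable_galtonWatson hZ0 hZrec m)
    (fun i => measurable_from_top.comp (comap_measurable (ξ m i)))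
    (fun i => indep_of_indep_of_le_left (indep_offspringSigma_sup hmeas hindep m
      (Nat.succ_ne_self i)) le_sup_left)
    (fun i => lintegral_of_poisson hμ (hpois m i) (hmeas m i)) hh

lemma lintegral_galtonWatson (m : ℕ) : ∫⁻ ω, (Z m ω : ℝ≥0∞) ∂P = ENNReal.ofReal μ ^ m := by
  induction m with
  | zero => simp [hZ0]
  | succ m ih =>
    simpa [ih, pow_succ, mul_comm] using lintegral_mul_galtonWatson_succ hZ0 hZrec hμ hmeas
      hindep hpois m (h := 1) measurable_const

lemma lintegral_galtonWatson_mul_add (n d : ℕ) :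
    ∫⁻ ω, (Z n ω : ℝ≥0∞) * Z (n + d) ω ∂P
      = ENNReal.ofReal μ ^ d * ∫⁻ ω, (Z n ω : ℝ≥0∞) ^ 2 ∂P := by
  induction d with
  | zero => simp [sq]
  | succ d ih =>
    rw [← add_assoc, lintegral_mul_galtonWatson_succ hZ0 hZrec hμ hmeas hindep hpois (n + d)
      (h := fun ω => (Z n ω : ℝ≥0∞)) (measurable_from_top.comp
        ((measurable_galtonWatson hZ0 hZrec n).mono (offspringSigma_mono (Nat.le_add_right n d))
          le_rfl)), ih, pow_succ]
    ring

lemma lintegral_galtonWatson_sq (m : ℕ) :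
    ∫⁻ ω, (Z m ω : ℝ≥0∞) ^ 2 ∂P
      = ENNReal.ofReal μ ^ m * ∑ i ∈ range (m + 1), ENNReal.ofReal μ ^ i := by
  induction m with
  | zero => simp [hZ0]
  | succ m ih =>
    have hsq := lintegral_sum_Icc_sq_of_indep (ξ := fun i ω => (ξ m i ω : ℝ≥0∞))
      (offspringSigma_le hmeas m)
      (fun i => (hmeas m i).comap_le) (measurable_galtonWatson hZ0 hZrec m)
      (fun i => measurable_from_top.comp (comap_measurable (ξ m i)))
      (fun i j hij => indep_offspringSigma_sup hmeas hindep m hij)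
      (fun i => lintegral_of_poisson hμ (hpois m i) (hmeas m i))
      (fun i => lintegral_sq_of_poisson hμ (hpois m i) (hmeas m i))
    simp only [hZrec m, Nat.cast_sum]
    rw [hsq, ih, lintegral_galtonWatson hZ0 hZrec hμ hmeas hindep hpois, sum_range_succ' _ (m + 1)]
    simp only [pow_succ, ← sum_mul]
    ring

lemma lintegral_galtonWatson_mul (k l : ℕ) :
    ∫⁻ ω, (Z k ω : ℝ≥0∞) * Z l ω ∂P
      = ENNReal.ofReal μ ^ max k l * ∑ i ∈ range (min k l + 1), ENNReal.ofReal μ ^ i := by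
  wlog hkl : k ≤ l generalizing k l
  · simpa [mul_comm, max_comm, min_comm] using this l k (by omega)
  obtain ⟨d, rfl⟩ := Nat.exists_eq_add_of_le hkl
  rw [lintegral_galtonWatson_mul_add hZ0 hZrec hμ hmeas hindep hpois,
    lintegral_galtonWatson_sq hZ0 hZrec hμ hmeas hindep hpois, max_eq_right hkl, min_eq_left hkl]
  ring

lemma lintegral_galtonWatson_mul_eq_ofReal (hμ1 : μ < 1) (k l : ℕ) :
    ∫⁻ ω, (Z k ω : ℝ≥0∞) * Z l ω ∂P
      = ENNReal.ofReal (μ ^ max k l * ((1 - μ ^ (min k l + 1)) / (1 - μ))) := by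
  simp_rw [lintegral_galtonWatson_mul hZ0 hZrec hμ hmeas hindep hpois, ← ENNReal.ofReal_pow hμ]
  rw [← ENNReal.ofReal_sum_of_nonneg fun i _ => pow_nonneg hμ i,
    ← ENNReal.ofReal_mul (pow_nonneg hμ _), geom_sum_eq hμ1.ne, ← neg_div_neg_eq, neg_sub,
    neg_sub]

end GaltonWatson

section ClusterCounts

variable {Ω : Type*} {G mΩ : MeasurableSpace Ω} {P : Measure Ω}

lemma ofReal_sum_indicator_one {ι : Type*} (s : Finset ι) (A : Set ℝ) (x : ι → ℝ) :
    ENNReal.ofReal (∑ i ∈ s, A.indicator (fun _ => (1 : ℝ)) (x i))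
      = ∑ i ∈ s, A.indicator 1 (x i) := by
  rw [ENNReal.ofReal_sum_of_nonneg fun i _ => Set.indicator_nonneg (fun _ _ => zero_le_one) _]
  refine sum_congr rfl fun i _ => ?_
  by_cases h : x i ∈ A <;> simp [h]

lemma sum_Icc_indicator_one_le (n : ℕ) (A : Set ℝ) (x : ℕ → ℝ) :
    ∑ i ∈ Icc 1 n, A.indicator (1 : ℝ → ℝ≥0∞) (x i) ≤ n :=
  (sum_le_sum fun i _ => Set.indicator_le_self' (fun _ _ => zero_le_one) (x i)).trans (by simp)

-- No integrability is needed: for nonnegative functions the Bochner integral is the `toReal` of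
-- the lower Lebesgue integral, and `|a - b| ≤ max a b` for `a, b ≥ 0`.
lemma abs_integral_mul_sub_le_of_nonneg {X Y : Ω → ℝ} (hX : 0 ≤ X) (hY : 0 ≤ Y)
    (hXm : AEStronglyMeasurable X P) (hYm : AEStronglyMeasurable Y P) {b : ℝ} (hb : 0 ≤ b)
    (hXY : ∫⁻ ω, ENNReal.ofReal (X ω * Y ω) ∂P ≤ ENNReal.ofReal b)
    (hXY' : (∫⁻ ω, ENNReal.ofReal (X ω) ∂P) * ∫⁻ ω, ENNReal.ofReal (Y ω) ∂P ≤ ENNReal.ofReal b) :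
    |∫ ω, X ω * Y ω ∂P - (∫ ω, X ω ∂P) * ∫ ω, Y ω ∂P| ≤ b := by
  rw [integral_eq_lintegral_of_nonneg_ae (ae_of_all _ fun ω => mul_nonneg (hX ω) (hY ω))
      (hXm.mul hYm), integral_eq_lintegral_of_nonneg_ae (ae_of_all _ hX) hXm,
    integral_eq_lintegral_of_nonneg_ae (ae_of_all _ hY) hYm, ← ENNReal.toReal_mul]
  exact abs_sub_le_of_nonneg_of_le ENNReal.toReal_nonneg (ENNReal.toReal_le_of_le_ofReal hb hXY)
    ENNReal.toReal_nonneg (ENNReal.toReal_le_of_le_ofReal hb hXY')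

lemma abs_integral_count_mul_sub_le_of_pqd (hG : G ≤ mΩ) {N₁ N₂ : Ω → ℕ}
    (hN₁ : Measurable[G] N₁) (hN₂ : Measurable[G] N₂)
    (hpqd : ∀ i j : ℕ, 1 ≤ i → 1 ≤ j →
      P {ω | i ≤ N₁ ω} * P {ω | j ≤ N₂ ω} ≤ P {ω | i ≤ N₁ ω ∧ j ≤ N₂ ω})
    {T S : ℕ → Ω → ℝ} (hT : ∀ i, Measurable (T i)) (hS : ∀ j, Measurable (S j))
    (hindep : ∀ j, Indep G (MeasurableSpace.comap (S j) inferInstance) P)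
    {A B : Set ℝ} (hA : MeasurableSet A) (hB : MeasurableSet B) {c m : ℝ} (hc : 0 ≤ c)
    (hm : 0 ≤ m) (htail : ∀ j, 1 ≤ j → P (S j ⁻¹' B) ≤ ENNReal.ofReal c)
    (hmoment : ∫⁻ ω, (N₁ ω : ℝ≥0∞) * N₂ ω ∂P = ENNReal.ofReal m) :
    |(∫ ω, (∑ i ∈ Icc 1 (N₁ ω), A.indicator (fun _ => (1 : ℝ)) (T i ω))
          * (∑ j ∈ Icc 1 (N₂ ω), B.indicator (fun _ => (1 : ℝ)) (S j ω)) ∂P)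
        - (∫ ω, ∑ i ∈ Icc 1 (N₁ ω), A.indicator (fun _ => (1 : ℝ)) (T i ω) ∂P)
          * (∫ ω, ∑ j ∈ Icc 1 (N₂ ω), B.indicator (fun _ => (1 : ℝ)) (S j ω) ∂P)| ≤ c * m := by
  have hN₁' : Measurable N₁ := hN₁.mono hG le_rfl
  have hN₂' : Measurable N₂ := hN₂.mono hG le_rfl
  have hcount_nonneg (n : ℕ) (U : Set ℝ) (x : ℕ → ℝ) :
      0 ≤ ∑ i ∈ Icc 1 n, U.indicator (fun _ => (1 : ℝ)) (x i) :=
    sum_nonneg fun i _ => Set.indicator_nonneg (fun _ _ => zero_le_one) _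
  have hthin {h : Ω → ℝ≥0∞} (hh : Measurable[G] h) :
      ∫⁻ ω, h ω * ∑ j ∈ Icc 1 (N₂ ω), B.indicator 1 (S j ω) ∂P
        ≤ ENNReal.ofReal c * ∫⁻ ω, h ω * N₂ ω ∂P :=
    lintegral_mul_sum_Icc_le_of_indep hG (fun j => (hS j).comap_le) hN₂
      (fun j => (measurable_const.indicator hB).comp (comap_measurable (S j))) hindep
      (fun j hj => (lintegral_indicator_one (hS j hB)).trans_le (htail j hj)) hh
  refine abs_integral_mul_sub_le_of_nonneg
    (X := fun ω => ∑ i ∈ Icc 1 (N₁ ω), A.indicator (fun _ => (1 : ℝ)) (T i ω))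
    (Y := fun ω => ∑ j ∈ Icc 1 (N₂ ω), B.indicator (fun _ => (1 : ℝ)) (S j ω))
    (fun ω => hcount_nonneg _ _ _) (fun ω => hcount_nonneg _ _ _)
    (measurable_sum_Icc hN₁' fun i =>
      (measurable_const.indicator hA).comp (hT i)).aestronglyMeasurable
    (measurable_sum_Icc hN₂' fun j =>
      (measurable_const.indicator hB).comp (hS j)).aestronglyMeasurable
    (mul_nonneg hc hm) ?_ ?_
  · simp_rw [ENNReal.ofReal_mul (hcount_nonneg _ _ _), ofReal_sum_indicator_one]
    calc _ ≤ ∫⁻ ω, (N₁ ω : ℝ≥0∞) * ∑ j ∈ Icc 1 (N₂ ω), B.indicator 1 (S j ω) ∂P :=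
          lintegral_mono fun ω => mul_le_mul_left (sum_Icc_indicator_one_le _ _ _) _
      _ ≤ ENNReal.ofReal c * ∫⁻ ω, (N₁ ω : ℝ≥0∞) * N₂ ω ∂P :=
          hthin (measurable_from_top.comp hN₁)
      _ = ENNReal.ofReal (c * m) := by rw [hmoment, ENNReal.ofReal_mul hc]
  · simp_rw [ofReal_sum_indicator_one]
    calc _ ≤ (∫⁻ ω, (N₁ ω : ℝ≥0∞) ∂P) * (ENNReal.ofReal c * ∫⁻ ω, (N₂ ω : ℝ≥0∞) ∂P) :=
          mul_le_mul' (lintegral_mono fun ω => sum_Icc_indicator_one_le _ _ _)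
            (by simpa using hthin (h := 1) measurable_const)
      _ ≤ ENNReal.ofReal c * ∫⁻ ω, (N₁ ω : ℝ≥0∞) * N₂ ω ∂P := by
          rw [mul_left_comm]
          exact mul_le_mul_right (lintegral_mul_le_lintegral_mul_of_pqd hN₁' hN₂' hpqd) _
      _ = ENNReal.ofReal (c * m) := by rw [hmoment, ENNReal.ofReal_mul hc]

end ClusterCounts

theorem cluster_generation_cov_bound_general {Ω : Type*} [MeasurableSpace Ω]
    (P : Measure Ω) [IsProbabilityMeasure P]
    (μ : ℝ) (hμ0 : 0 < μ) (hμ1 : μ < 1)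
    (ξ : ℕ → ℕ → Ω → ℕ)
    (hmeas : ∀ k i, Measurable (ξ k i))
    (hindep : iIndepFun
      (fun p : ℕ × ℕ => ξ p.1 p.2) P)
    (hpois : ∀ k i n, P {ω | ξ k i ω = n}
      = ENNReal.ofReal (Real.exp (-μ) * μ ^ n / n.factorial))
    (Z : ℕ → Ω → ℕ)
    (hZ0 : ∀ ω, Z 0 ω = 1)
    (hZrec : ∀ k ω, Z (k + 1) ω = ∑ i ∈ Finset.Icc 1 (Z k ω), ξ k i ω)
    (k l : ℕ) (δ ν : ℝ) (hν : 0 ≤ ν)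
    (s t r u : ℝ) (htr : 0 < t + r)
    (T S : ℕ → Ω → ℝ)
    (hT : ∀ i, Measurable (T i)) (hS : ∀ j, Measurable (S j))
    (hindepTS : IndepFun (fun ω => (fun q : ℕ × ℕ => (T q.1 ω, S q.2 ω)))
      (fun ω => (fun q : ℕ × ℕ => ξ q.1 q.2 ω)) P)
    (hStail : ∀ j : ℕ, 1 ≤ j →
      P {ω | t + r ≤ S j ω} ≤ ENNReal.ofReal ((l : ℝ) ^ (1 + δ) * ν / (t + r) ^ (1 + δ)))
    (hpqd : ∀ i j : ℕ, 1 ≤ i → 1 ≤ j →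
      P {ω | i ≤ Z k ω} * P {ω | j ≤ Z l ω} ≤ P {ω | i ≤ Z k ω ∧ j ≤ Z l ω}) :
    |(∫ ω, (∑ i ∈ Finset.Icc 1 (Z k ω), (Set.Ioc s t).indicator (fun _ => (1 : ℝ)) (T i ω))
          * (∑ j ∈ Finset.Icc 1 (Z l ω),
              (Set.Ioc (t + r) u).indicator (fun _ => (1 : ℝ)) (S j ω)) ∂P)
        - (∫ ω, ∑ i ∈ Finset.Icc 1 (Z k ω),
              (Set.Ioc s t).indicator (fun _ => (1 : ℝ)) (T i ω) ∂P)
          * (∫ ω, ∑ j ∈ Finset.Icc 1 (Z l ω),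
              (Set.Ioc (t + r) u).indicator (fun _ => (1 : ℝ)) (S j ω) ∂P)|
      ≤ 2 * ((l : ℝ) ^ (1 + δ) * ν / (t + r) ^ (1 + δ)) * μ ^ max k l
          * ((1 - μ ^ (min k l + 1)) / (1 - μ)) := by
  have hΞ : Measurable fun ω (q : ℕ × ℕ) => ξ q.1 q.2 ω :=
    measurable_pi_lambda _ fun q => hmeas q.1 q.2
  have hZ m : Measurable[MeasurableSpace.comap (fun ω (q : ℕ × ℕ) => ξ q.1 q.2 ω) inferInstance]
      (Z m) :=
    (measurable_galtonWatson hZ0 hZrec m).mono (offspringSigma_le_comap m) le_rfl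
  have hC : 0 ≤ (l : ℝ) ^ (1 + δ) * ν / (t + r) ^ (1 + δ) := by positivity
  have hgeom : 0 ≤ (1 - μ ^ (min k l + 1)) / (1 - μ) :=
    div_nonneg (sub_nonneg.2 (pow_le_one₀ hμ0.le hμ1.le)) (sub_nonneg.2 hμ1.le)
  have hR : 0 ≤ μ ^ max k l * ((1 - μ ^ (min k l + 1)) / (1 - μ)) :=
    mul_nonneg (pow_nonneg hμ0.le _) hgeom
  refine (abs_integral_count_mul_sub_le_of_pqd hΞ.comap_le (hZ k) (hZ l) hpqd hT hS
    (fun j => indep_of_indep_of_le_right hindepTS.symm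
      ((measurable_pi_apply (0, j)).snd.comp
        (comap_measurable fun ω (q : ℕ × ℕ) => (T q.1 ω, S q.2 ω))).comap_le)
    measurableSet_Ioc measurableSet_Ioc hC hR
    (fun j hj => (measure_mono fun ω hω => hω.1.le).trans (hStail j hj))
    (lintegral_galtonWatson_mul_eq_ofReal hZ0 hZrec hμ0.le hmeas hindep hpois hμ1 k l)).trans ?_
  nlinarith [mul_nonneg hC hR]

/-- Per-generation covariance bound for a Hawkes cluster: with `(Z_k)` a Galton–Watson
process with Poisson(μ) offspring (`0 < μ < 1`), arrival times `(T_i)`, `(S_j)` independent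
of the offspring variables, the tail bound `ℙ(S_j ≥ t+r) ≤ l^{1+δ} ν / (t+r)^{1+δ}`, and
positive quadrant dependence of `(Z_k, Z_l)`, one has
`|Cov(Σ_{i=1}^{Z_k} 1_{T_i ∈ (s,t]}, Σ_{j=1}^{Z_l} 1_{S_j ∈ (t+r,u]})|
  ≤ 2 l^{1+δ} ν / (t+r)^{1+δ} · μ^{max(k,l)} (1-μ^{min(k,l)+1})/(1-μ)`. -/
theorem cluster_generation_cov_bound {Ω : Type*} [MeasurableSpace Ω]
    (P : Measure Ω) [IsProbabilityMeasure P]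
    (μ : ℝ) (hμ0 : 0 < μ) (hμ1 : μ < 1)
    (ξ : ℕ → ℕ → Ω → ℕ)
    (hmeas : ∀ k i, Measurable (ξ k i))
    (hindep : iIndepFun
      (fun p : ℕ × ℕ => ξ p.1 p.2) P)
    (hpois : ∀ k i n, P {ω | ξ k i ω = n}
      = ENNReal.ofReal (Real.exp (-μ) * μ ^ n / n.factorial))
    (Z : ℕ → Ω → ℕ)
    (hZ0 : ∀ ω, Z 0 ω = 1)
    (hZrec : ∀ k ω, Z (k + 1) ω = ∑ i ∈ Finset.Icc 1 (Z k ω), ξ k i ω)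
    (k l : ℕ) (δ ν : ℝ) (hδ : 0 < δ) (hν : 0 ≤ ν)
    (s t r u : ℝ) (hst : s < t) (hr : 0 < r) (htu : t + r < u) (htr : 0 < t + r)
    (T S : ℕ → Ω → ℝ)
    (hT : ∀ i, Measurable (T i)) (hS : ∀ j, Measurable (S j))
    (hindepTS : IndepFun (fun ω => (fun q : ℕ × ℕ => (T q.1 ω, S q.2 ω)))
      (fun ω => (fun q : ℕ × ℕ => ξ q.1 q.2 ω)) P)
    (hStail : ∀ j : ℕ, 1 ≤ j →
      P {ω | t + r ≤ S j ω} ≤ ENNReal.ofReal ((l : ℝ) ^ (1 + δ) * ν / (t + r) ^ (1 + δ)))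
    (hpqd : ∀ i j : ℕ, 1 ≤ i → 1 ≤ j →
      P {ω | i ≤ Z k ω} * P {ω | j ≤ Z l ω} ≤ P {ω | i ≤ Z k ω ∧ j ≤ Z l ω}) :
    |(∫ ω, (∑ i ∈ Finset.Icc 1 (Z k ω), (Set.Ioc s t).indicator (fun _ => (1 : ℝ)) (T i ω))
          * (∑ j ∈ Finset.Icc 1 (Z l ω),
              (Set.Ioc (t + r) u).indicator (fun _ => (1 : ℝ)) (S j ω)) ∂P)
        - (∫ ω, ∑ i ∈ Finset.Icc 1 (Z k ω),
              (Set.Ioc s t).indicator (fun _ => (1 : ℝ)) (T i ω) ∂P)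
          * (∫ ω, ∑ j ∈ Finset.Icc 1 (Z l ω),
              (Set.Ioc (t + r) u).indicator (fun _ => (1 : ℝ)) (S j ω) ∂P)|
      ≤ 2 * ((l : ℝ) ^ (1 + δ) * ν / (t + r) ^ (1 + δ)) * μ ^ max k l
          * ((1 - μ ^ (min k l + 1)) / (1 - μ)) :=
  cluster_generation_cov_bound_general P μ hμ0 hμ1 ξ hmeas hindep hpois Z hZ0 hZrec k l δ ν hν s t r
    u htr T S hT hS hindepTS hStail hpqd
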